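/- Let H be a Hilbert space and φ a bounded finite potent endomorphism with index i(φ). Then the adjoint φ* is bounded finite potent and i(φ*) = i(φ). -/

import Mathlib

/-!
Since `φ` is bijective on `W`, every power `φᵐ` maps onto `W`, and since `φⁿ` kills `U`,
`Im φⁿ ⊆ W`. With `ker (φ*)ᵏ = (Im φᵏ)ᗮ` this gives
`U' ⊆ ker (φ*)ⁿ' = (Im φⁿ')ᗮ ⊆ Wᗮ ⊆ (Im φⁿ)ᗮ = ker (φ*)ⁿ`, so `n' ≤ n`; exchanging the roles of
`φ` and `φ*` (using `φ** = φ`) gives `n ≤ n'`. Finite potency of `φ*` holds because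
`Im (φ*)ⁿ' ⊆ W'`.
-/

open ContinuousLinearMap
open scoped InnerProduct

namespace Module.End

variable {R M : Type*} [Semiring R] [AddCommMonoid M] [Module R M] {f : Module.End R M}

theorem restrict_pow_eq_zero_iff {p : Submodule R M} (hp : ∀ x ∈ p, f x ∈ p) (n : ℕ) :
    (f.restrict hp) ^ n = 0 ↔ p ≤ LinearMap.ker (f ^ n) := by
  rw [pow_restrict, LinearMap.ext_iff]
  simp [SetLike.le_def, Subtype.ext_iff]

theorem le_range_pow_of_surjective_restrict {W : Submodule R M} (hW : ∀ x ∈ W, f x ∈ W)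
    (hsurj : Function.Surjective (f.restrict hW)) (m : ℕ) : W ≤ LinearMap.range (f ^ m) := by
  intro w hw
  have hsurj_pow : Function.Surjective ((f.restrict hW) ^ m) := by
    rw [coe_pow]; exact hsurj.iterate m
  obtain ⟨w₀, hw₀⟩ := hsurj_pow ⟨w, hw⟩
  rw [pow_restrict] at hw₀
  exact ⟨w₀, congrArg Subtype.val hw₀⟩

theorem range_pow_le_of_isCompl {W U : Submodule R M} (hWU : IsCompl W U)
    (hW : ∀ x ∈ W, f x ∈ W) {n : ℕ} (hU : U ≤ LinearMap.ker (f ^ n)) :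
    LinearMap.range (f ^ n) ≤ W := by
  rintro _ ⟨x, rfl⟩
  obtain ⟨w, hw, u, hu, rfl⟩ := Submodule.mem_sup.1 (hWU.sup_eq_top ▸ Submodule.mem_top (x := x))
  rw [map_add, hU hu, add_zero]
  exact pow_apply_mem_of_forall_mem n hW w hw

end Module.End

namespace ContinuousLinearMap

variable {𝕜 E : Type*} [RCLike 𝕜] [NormedAddCommGroup E] [InnerProductSpace 𝕜 E] [CompleteSpace E]

theorem adjoint_pow (A : E →L[𝕜] E) (n : ℕ) : (A ^ n)† = A† ^ n := by
  simp only [← star_eq_adjoint, star_pow]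

theorem le_ker_adjoint_pow {A : E →L[𝕜] E} {W U U' : Submodule 𝕜 E} (hWU : IsCompl W U)
    (hW : ∀ x ∈ W, A x ∈ W) (hsurj : Function.Surjective (A.toLinearMap.restrict hW))
    {n k : ℕ} (hU : U ≤ (A ^ n).ker) (hU' : U' ≤ (A† ^ k).ker) : U' ≤ (A† ^ n).ker := by
  have hW_le_range : W ≤ (A ^ k).range := by
    simpa only [toLinearMap_pow] using Module.End.le_range_pow_of_surjective_restrict hW hsurj k
  have hrange_le_W : (A ^ n).range ≤ W := by
    simpa only [toLinearMap_pow] using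
      Module.End.range_pow_le_of_isCompl hWU hW (by simpa only [toLinearMap_pow] using hU)
  calc U' ≤ (A† ^ k).ker := hU'
    _ = (A ^ k).rangeᗮ := by rw [orthogonal_range, adjoint_pow]
    _ ≤ Wᗮ := Submodule.orthogonal_le hW_le_range
    _ ≤ (A ^ n).rangeᗮ := Submodule.orthogonal_le hrange_le_W
    _ = (A† ^ n).ker := by rw [orthogonal_range, adjoint_pow]

theorem restrict_adjoint_pow_eq_zero {A B : E →L[𝕜] E} (hAB : A† = B)
    {W U U' : Submodule 𝕜 E} (hWU : IsCompl W U) (hW : ∀ x ∈ W, A x ∈ W)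
    (hsurj : Function.Surjective (A.toLinearMap.restrict hW))
    (hU : ∀ x ∈ U, A x ∈ U) (hU' : ∀ x ∈ U', B x ∈ U') {n k : ℕ}
    (hn : (A.toLinearMap.restrict hU) ^ n = 0) (hk : (B.toLinearMap.restrict hU') ^ k = 0) :
    (B.toLinearMap.restrict hU') ^ n = 0 := by
  subst hAB
  rw [Module.End.restrict_pow_eq_zero_iff, ← toLinearMap_pow] at hn hk ⊢
  exact le_ker_adjoint_pow hWU hW hsurj hn hk

end ContinuousLinearMap

theorem adjoint_index_eq_general {H : Type*} [NormedAddCommGroup H]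
    [InnerProductSpace ℂ H] [CompleteSpace H]
    (φ : H →L[ℂ] H)
    (W U : Submodule ℂ H) (hWU : IsCompl W U)
    (hW : ∀ x ∈ W, φ.toLinearMap x ∈ W) (hU : ∀ x ∈ U, φ.toLinearMap x ∈ U)
    (hWa : Function.Bijective (φ.toLinearMap.restrict hW))
    (W' U' : Submodule ℂ H) (hWU' : IsCompl W' U') [FiniteDimensional ℂ W']
    (hW' : ∀ x ∈ W', (ContinuousLinearMap.adjoint φ).toLinearMap x ∈ W')
    (hU' : ∀ x ∈ U', (ContinuousLinearMap.adjoint φ).toLinearMap x ∈ U')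
    (hWa' : Function.Bijective ((ContinuousLinearMap.adjoint φ).toLinearMap.restrict hW'))
    -- `n` is the index of `φ`: the minimal nilpotency order of `φ|_U`
    (n : ℕ) (hn : (φ.toLinearMap.restrict hU) ^ n = 0)
    (hnmin : ∀ m : ℕ, (φ.toLinearMap.restrict hU) ^ m = 0 → n ≤ m)
    -- `n'` is the index of `φ*`
    (n' : ℕ) (hn' : ((ContinuousLinearMap.adjoint φ).toLinearMap.restrict hU') ^ n' = 0)
    (hnmin' : ∀ m : ℕ,
      ((ContinuousLinearMap.adjoint φ).toLinearMap.restrict hU') ^ m = 0 → n' ≤ m) :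
    (∃ m : ℕ, FiniteDimensional ℂ
      (LinearMap.range ((ContinuousLinearMap.adjoint φ).toLinearMap ^ m))) ∧
    n' = n := by
  refine ⟨⟨n', ?_⟩, le_antisymm ?_ ?_⟩
  · exact Submodule.finiteDimensional_of_le <| Module.End.range_pow_le_of_isCompl hWU' hW' <|
      (Module.End.restrict_pow_eq_zero_iff hU' n').1 hn'
  · exact hnmin' n <| restrict_adjoint_pow_eq_zero rfl hWU hW hWa.2 hU hU' hn hn'
  · exact hnmin n' <|
      restrict_adjoint_pow_eq_zero (adjoint_adjoint φ) hWU' hW' hWa'.2 hU' hU hn' hn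

/-- The adjoint of a bounded finite potent endomorphism is bounded finite potent and
has the same index: if `n` is the nilpotency order of `φ|_{U_φ}` and `n'` that of
`φ*|_{U_{φ*}}`, then `n' = n`. -/
theorem adjoint_index_eq {H : Type*} [NormedAddCommGroup H]
    [InnerProductSpace ℂ H] [CompleteSpace H]
    (φ : H →L[ℂ] H)
    (W U : Submodule ℂ H) (hWU : IsCompl W U) [FiniteDimensional ℂ W]
    (hW : ∀ x ∈ W, φ.toLinearMap x ∈ W) (hU : ∀ x ∈ U, φ.toLinearMap x ∈ U)
    (hWa : Function.Bijective (φ.toLinearMap.restrict hW))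
    (W' U' : Submodule ℂ H) (hWU' : IsCompl W' U') [FiniteDimensional ℂ W']
    (hW' : ∀ x ∈ W', (ContinuousLinearMap.adjoint φ).toLinearMap x ∈ W')
    (hU' : ∀ x ∈ U', (ContinuousLinearMap.adjoint φ).toLinearMap x ∈ U')
    (hWa' : Function.Bijective ((ContinuousLinearMap.adjoint φ).toLinearMap.restrict hW'))
    -- `n` is the index of `φ`: the minimal nilpotency order of `φ|_U`
    (n : ℕ) (hn : (φ.toLinearMap.restrict hU) ^ n = 0)
    (hnmin : ∀ m : ℕ, (φ.toLinearMap.restrict hU) ^ m = 0 → n ≤ m)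
    -- `n'` is the index of `φ*`
    (n' : ℕ) (hn' : ((ContinuousLinearMap.adjoint φ).toLinearMap.restrict hU') ^ n' = 0)
    (hnmin' : ∀ m : ℕ,
      ((ContinuousLinearMap.adjoint φ).toLinearMap.restrict hU') ^ m = 0 → n' ≤ m) :
    (∃ m : ℕ, FiniteDimensional ℂ
      (LinearMap.range ((ContinuousLinearMap.adjoint φ).toLinearMap ^ m))) ∧
    n' = n :=
  adjoint_index_eq_general φ W U hWU hW hU hWa W' U' hWU' hW' hU' hWa' n hn hnmin n' hn' hnmin'
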